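/- (Theorem 3.1.1: classification of finite-type surfaces of the first family) There exist real constants λ₁, λ₂, λ₃ with Δ(r₁) = λ₁·t, Δ(r₂) = λ₂·a(t), Δ(r₃) = λ₃·s for all (t,s) ∈ I × ℝ (where r₁ = t, r₂ = a(t), r₃ = s) if and only if one of the following holds: (1) a″ ≡ 0 on I, i.e. a(t) = αt + β for some α, β ∈ ℝ (so S₁ has zero mean curvature), in which case λ₁ = λ₂ = λ₃ = 0; or (2) there exists c > 0 with t² + a(t)² = c for all t ∈ I, i.e. a(t) = ±√(c − t²) (the Euclidean circular cylinder), in which case λ₁ = λ₂ = 1/c and λ₃ = 0. -/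

import Mathlib

/-!
For a coordinate function of the form `φ(t, s) = f(t) + c s` the two flux terms of `Δφ` depend on
`t` alone, which gives `Δt = a′a″/(1+a′²)²`, `Δa = -a″/(1+a′²)²` and
`Δs = -a″(t + a a′)/(2(1+a′²)²)`. If `a″ ≡ 0` all three vanish. Otherwise pick `t₀` with
`a″(t₀) ≠ 0`. The third equation forces `λ₃ = 0` and `t + a a′ = 0` near `t₀`, while the first two
give `λ₁ t = -λ₂ a a′` on all of `I`; comparing the two near `t₀` yields `λ₁ = λ₂ ≠ 0`, hence
`t + a a′ = 0` on `I`, i.e. `t² + a²` is a constant `c`. Differentiating once more,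
`a a″ = -(1 + a′²)`, and the second equation becomes `λ₂ c = 1`.
-/

noncomputable section

/-- Partial derivative with respect to the first (t) variable. -/
def pdx (f : ℝ × ℝ → ℝ) : ℝ × ℝ → ℝ := fun p => fderiv ℝ f p (1, 0)

/-- Partial derivative with respect to the second (s) variable. -/
def pdy (f : ℝ × ℝ → ℝ) : ℝ × ℝ → ℝ := fun p => fderiv ℝ f p (0, 1)

/-- First fundamental form coefficient `E = 1 + a′² + ¼(a − t a′)²` of the ruled surface
`S₁ : r(t,s) = (t, a(t), s)` in the Heisenberg group `H₃`. -/
def aE (a : ℝ → ℝ) (t : ℝ) : ℝ := 1 + deriv a t ^ 2 + (a t - t * deriv a t) ^ 2 / 4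

/-- First fundamental form coefficient `F = ½(a − t a′)` of `S₁`. -/
def aF (a : ℝ → ℝ) (t : ℝ) : ℝ := (a t - t * deriv a t) / 2

/-- `W = √(EG − F²) = √(1 + a′²)` for `S₁` (here `G = 1`). -/
def aW (a : ℝ → ℝ) (t : ℝ) : ℝ := Real.sqrt (1 + deriv a t ^ 2)

/-- The Laplace–Beltrami operator of `S₁ : r(t,s) = (t, a(t), s)`, with the sign convention
`Δφ = −(1/W)[∂_t((G φ_t − F φ_s)/W) + ∂_s((−F φ_t + E φ_s)/W)]`, `G = 1`. -/
def lap1 (a : ℝ → ℝ) (φ : ℝ × ℝ → ℝ) : ℝ × ℝ → ℝ := fun p =>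
  -(1 / aW a p.1) *
    (pdx (fun q => (1 * pdx φ q - aF a q.1 * pdy φ q) / aW a q.1) p +
     pdy (fun q => (-(aF a q.1) * pdx φ q + aE a q.1 * pdy φ q) / aW a q.1) p)

/-- The finite-type system `Δr₁ = λ₁ t`, `Δr₂ = λ₂ a(t)`, `Δr₃ = λ₃ s` for the ruled surface
`S₁ : r(t,s) = (t, a(t), s)` in `H₃`. -/
def Sys1 (a : ℝ → ℝ) (I : Set ℝ) (l1 l2 l3 : ℝ) : Prop :=
  ∀ t ∈ I, ∀ s : ℝ,
    lap1 a (fun q => q.1) (t, s) = l1 * t ∧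
    lap1 a (fun q => a q.1) (t, s) = l2 * a t ∧
    lap1 a (fun q => q.2) (t, s) = l3 * s

open Filter Topology

section PartialDerivatives

variable {g : ℝ → ℝ} {p : ℝ × ℝ}

lemma hasFDerivAt_comp_fst (hg : DifferentiableAt ℝ g p.1) :
    HasFDerivAt (fun q : ℝ × ℝ => g q.1) ((fderiv ℝ g p.1).comp (.fst ℝ ℝ ℝ)) p :=
  hg.hasFDerivAt.comp p hasFDerivAt_fst

lemma pdx_comp_fst (hg : DifferentiableAt ℝ g p.1) : pdx (fun q => g q.1) p = deriv g p.1 := by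
  simp [pdx, (hasFDerivAt_comp_fst hg).fderiv]

lemma pdy_comp_fst (hg : DifferentiableAt ℝ g p.1) : pdy (fun q => g q.1) p = 0 := by
  simp [pdy, (hasFDerivAt_comp_fst hg).fderiv]

lemma hasFDerivAt_comp_fst_add_mul_snd (hg : DifferentiableAt ℝ g p.1) (c : ℝ) :
    HasFDerivAt (fun q : ℝ × ℝ => g q.1 + c * q.2)
      ((fderiv ℝ g p.1).comp (.fst ℝ ℝ ℝ) + c • .snd ℝ ℝ ℝ) p :=
  (hasFDerivAt_comp_fst hg).add (hasFDerivAt_snd.const_mul c)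

lemma pdx_comp_fst_add_mul_snd (hg : DifferentiableAt ℝ g p.1) (c : ℝ) :
    pdx (fun q => g q.1 + c * q.2) p = deriv g p.1 := by
  simp [pdx, (hasFDerivAt_comp_fst_add_mul_snd hg c).fderiv]

lemma pdy_comp_fst_add_mul_snd (hg : DifferentiableAt ℝ g p.1) (c : ℝ) :
    pdy (fun q => g q.1 + c * q.2) p = c := by
  simp [pdy, (hasFDerivAt_comp_fst_add_mul_snd hg c).fderiv]

lemma pdx_congr {f₁ f₂ : ℝ × ℝ → ℝ} (h : f₁ =ᶠ[𝓝 p] f₂) : pdx f₁ p = pdx f₂ p := by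
  simp only [pdx, h.fderiv_eq]

lemma pdy_congr {f₁ f₂ : ℝ × ℝ → ℝ} (h : f₁ =ᶠ[𝓝 p] f₂) : pdy f₁ p = pdy f₂ p := by
  simp only [pdy, h.fderiv_eq]

end PartialDerivatives

namespace ContDiffOn

variable {I : Set ℝ} {f : ℝ → ℝ} {n : WithTop ℕ∞} {t : ℝ}

lemma hasDerivAt_of_isOpen (hf : ContDiffOn ℝ n f I) (hn : n ≠ 0) (hI : IsOpen I) (ht : t ∈ I) :
    HasDerivAt f (deriv f t) t :=
  ((hf.contDiffAt (hI.mem_nhds ht)).differentiableAt hn).hasDerivAt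

lemma hasDerivAt_deriv_of_isOpen (hf : ContDiffOn ℝ n f I) (hn : 2 ≤ n) (hI : IsOpen I)
    (ht : t ∈ I) : HasDerivAt (deriv f) (deriv (deriv f) t) t :=
  (hf.deriv_of_isOpen hI (m := 1) hn).hasDerivAt_of_isOpen one_ne_zero hI ht

lemma continuousAt_deriv_deriv_of_isOpen (hf : ContDiffOn ℝ n f I) (hn : 2 ≤ n) (hI : IsOpen I)
    (ht : t ∈ I) : ContinuousAt (deriv (deriv f)) t :=
  ((hf.deriv_of_isOpen hI (m := 1) hn).continuousOn_deriv_of_isOpen hI le_rfl).continuousAt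
    (hI.mem_nhds ht)

end ContDiffOn

section FirstFundamentalForm

variable {a : ℝ → ℝ} {t : ℝ}

lemma aW_pos (a : ℝ → ℝ) (t : ℝ) : 0 < aW a t := Real.sqrt_pos.2 (by positivity)

lemma aW_sq (a : ℝ → ℝ) (t : ℝ) : aW a t ^ 2 = 1 + deriv a t ^ 2 := Real.sq_sqrt (by positivity)

lemma hasDerivAt_aW (h : DifferentiableAt ℝ (deriv a) t) :
    HasDerivAt (aW a) (deriv a t * deriv (deriv a) t / aW a t) t := by
  show HasDerivAt (fun x => √(1 + deriv a x ^ 2)) _ t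
  convert ((h.hasDerivAt.fun_pow 2).const_add 1).sqrt (by positivity) using 1
  simp only [aW]
  field_simp
  ring

lemma hasDerivAt_aF (h₁ : DifferentiableAt ℝ a t) (h₂ : DifferentiableAt ℝ (deriv a) t) :
    HasDerivAt (aF a) (-(t * deriv (deriv a) t) / 2) t := by
  have h : HasDerivAt (fun x => (a x - x * deriv a x) / 2)
      ((deriv a t - (1 * deriv a t + t * deriv (deriv a) t)) / 2) t :=
    (h₁.hasDerivAt.sub ((hasDerivAt_id t).mul h₂.hasDerivAt)).div_const 2
  exact h.congr_deriv (by ring)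

lemma differentiableAt_aE (h₁ : DifferentiableAt ℝ a t) (h₂ : DifferentiableAt ℝ (deriv a) t) :
    DifferentiableAt ℝ (aE a) t := by
  have : aE a = fun x => 1 + deriv a x ^ 2 + aF a x ^ 2 := by
    funext x; simp only [aE, aF]; ring
  rw [this]
  have := (hasDerivAt_aF h₁ h₂).differentiableAt
  fun_prop

end FirstFundamentalForm

section Laplacian

variable {I : Set ℝ} {a f : ℝ → ℝ} {t : ℝ}

theorem lap1_comp_fst_add_mul_snd (hI : IsOpen I) (ha : ContDiffOn ℝ 2 a I)
    (hf : ContDiffOn ℝ 2 f I) (ht : t ∈ I) (c s : ℝ) :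
    lap1 a (fun q => f q.1 + c * q.2) (t, s) =
      -((deriv (deriv f) t + c * t * deriv (deriv a) t / 2) * (1 + deriv a t ^ 2) -
          (deriv f t - c * aF a t) * deriv a t * deriv (deriv a) t) / (1 + deriv a t ^ 2) ^ 2 := by
  have ha₁ := ha.hasDerivAt_of_isOpen two_ne_zero hI ht
  have ha₂ := ha.hasDerivAt_deriv_of_isOpen le_rfl hI ht
  have hf₂ := hf.hasDerivAt_deriv_of_isOpen le_rfl hI ht
  have hW := hasDerivAt_aW ha₂.differentiableAt
  have hF := hasDerivAt_aF ha₁.differentiableAt ha₂.differentiableAt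
  have hE := differentiableAt_aE ha₁.differentiableAt ha₂.differentiableAt
  have hW₀ : aW a t ≠ 0 := (aW_pos a t).ne'
  have hnear : ∀ᶠ q : ℝ × ℝ in 𝓝 (t, s), q.1 ∈ I :=
    continuous_fst.continuousAt.preimage_mem_nhds (hI.mem_nhds ht)
  have hU : (fun q : ℝ × ℝ => (1 * pdx (fun q => f q.1 + c * q.2) q -
        aF a q.1 * pdy (fun q => f q.1 + c * q.2) q) / aW a q.1) =ᶠ[𝓝 (t, s)]
      fun q => (deriv f q.1 - c * aF a q.1) / aW a q.1 := by
    filter_upwards [hnear] with q hq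
    have hfq := (hf.hasDerivAt_of_isOpen two_ne_zero hI hq).differentiableAt
    rw [pdx_comp_fst_add_mul_snd hfq, pdy_comp_fst_add_mul_snd hfq]
    ring
  have hV : (fun q : ℝ × ℝ => (-aF a q.1 * pdx (fun q => f q.1 + c * q.2) q +
        aE a q.1 * pdy (fun q => f q.1 + c * q.2) q) / aW a q.1) =ᶠ[𝓝 (t, s)]
      fun q => (-aF a q.1 * deriv f q.1 + aE a q.1 * c) / aW a q.1 := by
    filter_upwards [hnear] with q hq
    have hfq := (hf.hasDerivAt_of_isOpen two_ne_zero hI hq).differentiableAt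
    rw [pdx_comp_fst_add_mul_snd hfq, pdy_comp_fst_add_mul_snd hfq]
  have hu : HasDerivAt (fun x => (deriv f x - c * aF a x) / aW a x) _ t :=
    (hf₂.sub (hF.const_mul c)).div hW hW₀
  have hv : DifferentiableAt ℝ (fun x => (-aF a x * deriv f x + aE a x * c) / aW a x) t :=
    ((hF.differentiableAt.neg.mul hf₂.differentiableAt).add (hE.mul_const c)).div
      hW.differentiableAt hW₀
  rw [lap1, pdx_congr hU, pdy_congr hV, pdx_comp_fst (p := (t, s)) hu.differentiableAt,
    pdy_comp_fst (p := (t, s)) hv, hu.deriv, ← aW_sq, Pi.sub_apply]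
  field_simp
  ring

lemma lap1_fst (hI : IsOpen I) (ha : ContDiffOn ℝ 2 a I) (ht : t ∈ I) (s : ℝ) :
    lap1 a (fun q => q.1) (t, s) =
      deriv a t * deriv (deriv a) t / (1 + deriv a t ^ 2) ^ 2 := by
  have h := lap1_comp_fst_add_mul_snd hI ha contDiffOn_id ht 0 s
  simp only [id, zero_mul, add_zero] at h
  rw [h]
  simp

lemma lap1_comp_fst (hI : IsOpen I) (ha : ContDiffOn ℝ 2 a I) (ht : t ∈ I) (s : ℝ) :
    lap1 a (fun q => a q.1) (t, s) = -deriv (deriv a) t / (1 + deriv a t ^ 2) ^ 2 := by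
  have h := lap1_comp_fst_add_mul_snd hI ha ha ht 0 s
  simp only [zero_mul, add_zero, sub_zero] at h
  rw [h]
  ring

lemma lap1_snd (hI : IsOpen I) (ha : ContDiffOn ℝ 2 a I) (ht : t ∈ I) (s : ℝ) :
    lap1 a (fun q => q.2) (t, s) =
      -(deriv (deriv a) t * (t + a t * deriv a t)) / (2 * (1 + deriv a t ^ 2) ^ 2) := by
  have h := lap1_comp_fst_add_mul_snd hI ha (contDiffOn_const (c := 0)) ht 1 s
  simp only [zero_add, one_mul] at h
  rw [h]
  simp only [deriv_const', aF]
  field_simp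
  ring

end Laplacian

lemma eq_of_eventually_mul_eq {c₁ c₂ t₀ : ℝ} (h : ∀ᶠ t in 𝓝 t₀, c₁ * t = c₂ * t) : c₁ = c₂ := by
  have h' : (c₁ * ·) =ᶠ[𝓝 t₀] (c₂ * ·) := h
  simpa using h'.deriv_eq

section Circle

variable {I : Set ℝ} {a : ℝ → ℝ}

lemma exists_sq_add_sq_eq_of_add_mul_deriv_eq_zero (hI : IsOpen I) (hIc : IsPreconnected I)
    (ha : ContDiffOn ℝ 2 a I) (h : ∀ t ∈ I, t + a t * deriv a t = 0) :
    ∃ c, ∀ t ∈ I, t ^ 2 + a t ^ 2 = c := by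
  have hd : ∀ t ∈ I, HasDerivAt (fun t => t ^ 2 + a t ^ 2) 0 t := fun t ht =>
    ((hasDerivAt_pow 2 t).add ((ha.hasDerivAt_of_isOpen two_ne_zero hI ht).pow 2)).congr_deriv
      (by linear_combination 2 * h t ht)
  exact hI.exists_is_const_of_deriv_eq_zero hIc
    (fun t ht => (hd t ht).differentiableAt.differentiableWithinAt) (fun t ht => (hd t ht).deriv)

lemma one_add_sq_add_mul_deriv_deriv_eq_zero (hI : IsOpen I) (ha : ContDiffOn ℝ 2 a I)
    (h : ∀ t ∈ I, t + a t * deriv a t = 0) {t : ℝ} (ht : t ∈ I) :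
    1 + deriv a t ^ 2 + a t * deriv (deriv a) t = 0 := by
  have hd := (hasDerivAt_id t).add ((ha.hasDerivAt_of_isOpen two_ne_zero hI ht).mul
    (ha.hasDerivAt_deriv_of_isOpen le_rfl hI ht))
  have hz : (fun t => id t + a t * deriv a t) =ᶠ[𝓝 t] fun _ => 0 :=
    eventually_of_mem (hI.mem_nhds ht) h
  have := hd.deriv.symm.trans hz.deriv_eq
  rw [deriv_const] at this
  linear_combination this

end Circle

section Classification

variable {I : Set ℝ} {a : ℝ → ℝ} {l1 l2 l3 : ℝ}

lemma sys1_zero_of_deriv_deriv_eq_zero (hI : IsOpen I) (ha : ContDiffOn ℝ 2 a I)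
    (h : ∀ t ∈ I, deriv (deriv a) t = 0) : Sys1 a I 0 0 0 := by
  intro t ht s
  simp [lap1_fst hI ha ht, lap1_comp_fst hI ha ht, lap1_snd hI ha ht, h t ht]

lemma exists_affine_of_deriv_deriv_eq_zero (hI : IsOpen I) (hIc : IsPreconnected I)
    (ha : ContDiffOn ℝ 2 a I) (h : ∀ t ∈ I, deriv (deriv a) t = 0) :
    ∃ α β : ℝ, ∀ t ∈ I, a t = α * t + β := by
  obtain ⟨α, hα⟩ := hI.exists_is_const_of_deriv_eq_zero hIc
    (fun t ht => (ha.hasDerivAt_deriv_of_isOpen le_rfl hI ht).differentiableAt.differentiableWithinAt)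
    h
  obtain ⟨β, hβ⟩ := hI.exists_eq_add_of_deriv_eq hIc (f := a) (g := (α * ·))
    (fun t ht => (ha.hasDerivAt_of_isOpen two_ne_zero hI ht).differentiableAt.differentiableWithinAt)
    (by fun_prop) (fun t ht => by simp [hα t ht])
  exact ⟨α, β, hβ⟩

namespace Sys1

lemma deriv_deriv_mul_eq_zero (hI : IsOpen I) (ha : ContDiffOn ℝ 2 a I) (h : Sys1 a I l1 l2 l3)
    {t : ℝ} (ht : t ∈ I) : deriv (deriv a) t * (t + a t * deriv a t) = 0 := by
  have h0 := (h t ht 0).2.2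
  rw [lap1_snd hI ha ht, mul_zero, div_eq_zero_iff, neg_eq_zero] at h0
  exact h0.resolve_right (by positivity)

lemma l3_eq_zero (hI : IsOpen I) (ha : ContDiffOn ℝ 2 a I) (h : Sys1 a I l1 l2 l3)
    {t : ℝ} (ht : t ∈ I) : l3 = 0 := by
  simpa [lap1_snd hI ha ht, h.deriv_deriv_mul_eq_zero hI ha ht] using (h t ht 1).2.2.symm

lemma mul_fst_eq (hI : IsOpen I) (ha : ContDiffOn ℝ 2 a I) (h : Sys1 a I l1 l2 l3)
    {t : ℝ} (ht : t ∈ I) : l1 * t = -(l2 * (a t * deriv a t)) := by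
  have h1 := (h t ht 0).1
  have h2 := (h t ht 0).2.1
  rw [lap1_fst hI ha ht] at h1
  rw [lap1_comp_fst hI ha ht] at h2
  rw [← h1, ← mul_assoc, ← h2]
  ring

variable {t₀ : ℝ}

lemma l2_ne_zero (hI : IsOpen I) (ha : ContDiffOn ℝ 2 a I) (h : Sys1 a I l1 l2 l3)
    (ht₀ : t₀ ∈ I) (hQ : deriv (deriv a) t₀ ≠ 0) : l2 ≠ 0 := by
  rintro rfl
  have h2 := (h t₀ ht₀ 0).2.1
  rw [lap1_comp_fst hI ha ht₀, zero_mul, div_eq_zero_iff, neg_eq_zero] at h2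
  exact h2.elim hQ (by positivity)

lemma eventually_add_mul_deriv_eq_zero (hI : IsOpen I) (ha : ContDiffOn ℝ 2 a I)
    (h : Sys1 a I l1 l2 l3) (ht₀ : t₀ ∈ I) (hQ : deriv (deriv a) t₀ ≠ 0) :
    ∀ᶠ t in 𝓝 t₀, t + a t * deriv a t = 0 := by
  filter_upwards [hI.mem_nhds ht₀,
    (ha.continuousAt_deriv_deriv_of_isOpen le_rfl hI ht₀).eventually_ne hQ] with t ht hQt
  exact (mul_eq_zero.1 (h.deriv_deriv_mul_eq_zero hI ha ht)).resolve_left hQt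

lemma l1_eq_l2 (hI : IsOpen I) (ha : ContDiffOn ℝ 2 a I) (h : Sys1 a I l1 l2 l3)
    (ht₀ : t₀ ∈ I) (hQ : deriv (deriv a) t₀ ≠ 0) : l1 = l2 := by
  refine eq_of_eventually_mul_eq (t₀ := t₀) ?_
  filter_upwards [hI.mem_nhds ht₀, h.eventually_add_mul_deriv_eq_zero hI ha ht₀ hQ] with t ht hcirc
  rw [h.mul_fst_eq hI ha ht]
  linear_combination (-l2) * hcirc

lemma add_mul_deriv_eq_zero (hI : IsOpen I) (ha : ContDiffOn ℝ 2 a I) (h : Sys1 a I l1 l2 l3)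
    (ht₀ : t₀ ∈ I) (hQ : deriv (deriv a) t₀ ≠ 0) {t : ℝ} (ht : t ∈ I) :
    t + a t * deriv a t = 0 := by
  have hl2 : l2 * (t + a t * deriv a t) = 0 := by
    linear_combination h.mul_fst_eq hI ha ht - t * h.l1_eq_l2 hI ha ht₀ hQ
  exact (mul_eq_zero.1 hl2).resolve_left (h.l2_ne_zero hI ha ht₀ hQ)

lemma exists_cylinder (hI : IsOpen I) (hIc : IsPreconnected I) (ha : ContDiffOn ℝ 2 a I)
    (h : Sys1 a I l1 l2 l3) (ht₀ : t₀ ∈ I) (hQ : deriv (deriv a) t₀ ≠ 0) :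
    ∃ c, 0 < c ∧ (∀ t ∈ I, t ^ 2 + a t ^ 2 = c) ∧ l1 = 1 / c ∧ l2 = 1 / c ∧ l3 = 0 := by
  have hcirc := fun t (ht : t ∈ I) => h.add_mul_deriv_eq_zero hI ha ht₀ hQ ht
  obtain ⟨c, hc⟩ := exists_sq_add_sq_eq_of_add_mul_deriv_eq_zero hI hIc ha hcirc
  have hsecond := one_add_sq_add_mul_deriv_deriv_eq_zero hI ha hcirc ht₀
  have ha₀ : a t₀ ≠ 0 := by
    intro h0
    rw [h0, zero_mul, add_zero] at hsecond
    exact absurd hsecond (by positivity)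
  have hcpos : 0 < c := by rw [← hc t₀ ht₀]; positivity
  have hl2c : l2 * c = 1 := by
    have h2 := (h t₀ ht₀ 0).2.1
    rw [lap1_comp_fst hI ha ht₀] at h2
    have hu : 1 + deriv a t₀ ^ 2 ≠ 0 := by positivity
    field_simp at h2
    -- `c = a²(1 + a′²)` as `t₀ = -a a′`, and `a a″ = -(1 + a′²)` turns `h2` into
    -- `λ₂ a²(1 + a′²)² = 1 + a′²`.
    have hfactor : (l2 * c - 1) * (1 + deriv a t₀ ^ 2) = 0 := by
      rw [← hc t₀ ht₀]
      linear_combination l2 * (1 + deriv a t₀ ^ 2) * (t₀ - a t₀ * deriv a t₀) * hcirc t₀ ht₀ -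
        a t₀ * h2 - hsecond
    linear_combination (mul_eq_zero.1 hfactor).resolve_right hu
  have hl2 := eq_one_div_of_mul_eq_one_left hl2c
  exact ⟨c, hcpos, hc, (h.l1_eq_l2 hI ha ht₀ hQ).trans hl2, hl2, h.l3_eq_zero hI ha ht₀⟩

end Sys1

end Classification

theorem finite_type_S1_classification
    (I : Set ℝ) (hI : IsOpen I) (hIconn : I.OrdConnected)
    (a : ℝ → ℝ) (ha : ContDiffOn ℝ (⊤ : ℕ∞) a I) :
    (∃ l1 l2 l3 : ℝ, Sys1 a I l1 l2 l3) ↔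
      ((∀ t ∈ I, deriv (deriv a) t = 0) ∧
          (∃ α β : ℝ, ∀ t ∈ I, a t = α * t + β) ∧ Sys1 a I 0 0 0) ∨
        (∃ c : ℝ, 0 < c ∧ (∀ t ∈ I, t ^ 2 + a t ^ 2 = c) ∧
          Sys1 a I (1 / c) (1 / c) 0) := by
  have ha₂ : ContDiffOn ℝ 2 a I := ha.of_le (WithTop.coe_le_coe.2 le_top)
  have hIc : IsPreconnected I := hIconn.isPreconnected
  constructor
  · rintro ⟨l1, l2, l3, h⟩
    by_cases hmin : ∀ t ∈ I, deriv (deriv a) t = 0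
    · exact Or.inl ⟨hmin, exists_affine_of_deriv_deriv_eq_zero hI hIc ha₂ hmin,
        sys1_zero_of_deriv_deriv_eq_zero hI ha₂ hmin⟩
    · push Not at hmin
      obtain ⟨t₀, ht₀, hQ⟩ := hmin
      obtain ⟨c, hc, hcirc, rfl, rfl, rfl⟩ := h.exists_cylinder hI hIc ha₂ ht₀ hQ
      exact Or.inr ⟨c, hc, hcirc, h⟩
  · rintro (⟨-, -, h⟩ | ⟨c, -, -, h⟩)
    exacts [⟨0, 0, 0, h⟩, ⟨1 / c, 1 / c, 0, h⟩]
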